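/- For every w ∈ θ, the representation P(w) of (P,θ) is ε-projective: every morphism from P(w) to the target of a proper epimorphism lifts along it. -/

import Mathlib

/-!
`P(w)` is generated, as a representation, by the single element `e = (e₁, e₂) ∈ P(w)_w`:
every other listed generator `i_x (e_c)` with `c < x` is obtained from `e` by the
compatibility condition `V_y⁺ ⊆ V_x⁻`. Hence a morphism out of `P(w)` is the same as an
element of the `w`-component of its target, and such elements lift along a proper
epimorphism because it is surjective on that component.
-/

open scoped Classical

/-! ## Posets with involution and their vector-space representations -/

structure PosetInv (P : Type) [PartialOrder P] where
  σ : P → P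
  invol : ∀ x, σ (σ x) = x

namespace PosetInv

variable {P : Type} [PartialOrder P]

/-- The equivalence relation whose classes are `{x, σ x}`. -/
def r (I : PosetInv P) (x y : P) : Prop := y = x ∨ y = I.σ x

theorem r_refl (I : PosetInv P) (x : P) : I.r x x := Or.inl rfl

theorem r_symm (I : PosetInv P) {x y : P} (h : I.r x y) : I.r y x := by
  rcases h with rfl | rfl
  · exact Or.inl rfl
  · exact Or.inr (I.invol x).symm

theorem r_trans (I : PosetInv P) {x y z : P} (h1 : I.r x y) (h2 : I.r y z) : I.r x z := by
  rcases h1 with rfl | rfl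
  · exact h2
  · rcases h2 with rfl | rfl
    · exact Or.inr rfl
    · rw [I.invol]; exact Or.inl rfl

def setoid (I : PosetInv P) : Setoid P := ⟨I.r, ⟨I.r_refl, I.r_symm, I.r_trans⟩⟩

/-- The set `θ` of equivalence classes. -/
def Classes (I : PosetInv P) : Type := Quotient I.setoid

/-- The class `[x]` of an element. -/
def cls (I : PosetInv P) (x : P) : I.Classes := Quotient.mk I.setoid x

/-- The underlying set of elements of a class. -/
def carrier (I : PosetInv P) : I.Classes → Set P :=
  Quotient.lift (fun x => {y | I.r x y}) (by
    intro a b hab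
    ext y
    constructor
    · intro h; exact I.r_trans (I.r_symm hab) h
    · intro h; exact I.r_trans hab h)

theorem mem_cls (I : PosetInv P) (x : P) : x ∈ I.carrier (I.cls x) := I.r_refl x

theorem sigma_mem_cls (I : PosetInv P) (x : P) : I.σ x ∈ I.carrier (I.cls x) := Or.inr rfl

end PosetInv

open PosetInv

/-- A vector-space representation `V = (V₀, V_z)_{z ∈ θ}` of the poset with involution
`(P, θ)`:  a finite-dimensional space `V₀` together with, for each class `z`, a subspace
`V_z ⊆ V₀^z` (functions on the class), satisfying `V_y⁺ ⊆ V_x⁻` for `y < x`. -/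
structure RepI (k : Type) [Field k] {P : Type} [PartialOrder P] (I : PosetInv P) where
  V0 : Type
  [acg : AddCommGroup V0]
  [mod : Module k V0]
  [fd : FiniteDimensional k V0]
  Vz : ∀ z : I.Classes, Submodule k (↥(I.carrier z) → V0)
  compat : ∀ ⦃x y : P⦄, y < x → ∀ h ∈ Vz (I.cls y),
    (fun w : ↥(I.carrier (I.cls x)) => if (w : P) = x then h ⟨y, I.mem_cls y⟩ else 0)
      ∈ Vz (I.cls x)

attribute [instance] RepI.acg RepI.mod RepI.fd

variable {k : Type} [Field k] {P : Type} [PartialOrder P] {I : PosetInv P}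

/-- A morphism of representations:  a linear map `φ : V₀ → W₀` with `φ^z(V_z) ⊆ W_z`. -/
@[ext]
structure Hom (V W : RepI k I) where
  φ : V.V0 →ₗ[k] W.V0
  maps : ∀ z, ∀ h ∈ V.Vz z, (fun w => φ (h w)) ∈ W.Vz z

namespace Hom

def comp {U V W : RepI k I} (g : Hom V W) (f : Hom U V) : Hom U W :=
  ⟨g.φ ∘ₗ f.φ, fun z h hh => g.maps z _ (f.maps z h hh)⟩

def idH (V : RepI k I) : Hom V V := ⟨LinearMap.id, fun _ _ hh => hh⟩

def zeroH (V W : RepI k I) : Hom V W :=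
  ⟨0, fun z _ _ => (W.Vz z).zero_mem⟩

end Hom

/-- `f` is a proper epimorphism:  surjective on `V₀` and on each `V_z`. -/
def ProperEpi {V W : RepI k I} (f : Hom V W) : Prop :=
  Function.Surjective f.φ ∧
    ∀ z, ∀ g ∈ W.Vz z, ∃ h ∈ V.Vz z, (fun w => f.φ (h w)) = g

/-- `f` is a proper monomorphism:  injective on `U₀`, and the elements of `V_z` all of whose
coordinates lie in the image of `f` are exactly the images of elements of `U_z`. -/
def ProperMono {U V : RepI k I} (f : Hom U V) : Prop :=
  Function.Injective f.φ ∧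
    ∀ z, ∀ h ∈ V.Vz z, (∀ w, h w ∈ LinearMap.range f.φ) →
      ∃ g ∈ U.Vz z, (fun w => f.φ (g w)) = h

/-- `(u, v)` is an `ε`-sequence:  `0 → U₀ → V₀ → W₀ → 0` and each
`0 → U_z → V_z → W_z → 0` is exact. -/
def IsEpsSeq {U V W : RepI k I} (u : Hom U V) (v : Hom V W) : Prop :=
  Function.Injective u.φ ∧ Function.Surjective v.φ ∧
    LinearMap.range u.φ = LinearMap.ker v.φ ∧
    ∀ z, (∀ h ∈ W.Vz z, ∃ g ∈ V.Vz z, (fun w => v.φ (g w)) = h) ∧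
      (∀ g ∈ V.Vz z, (fun w => v.φ (g w)) = 0 →
        ∃ p ∈ U.Vz z, (fun w => u.φ (p w)) = g)

variable {k : Type} [Field k] {P : Type} [PartialOrder P]

/-- The generating set of `P(w)_z` for a class `z = (a₁, b₁)`:  the functions
`(λ(a,a₁)e₁, 0), (0, λ(a,b₁)e₁), (λ(b,a₁)e₂, 0), (0, λ(b,b₁)e₂)`, where `e_c = g c` for `c`
in the class of `a`; i.e. all `i_{x'} (g c)` with `c < x'`. -/
def genset (I : PosetInv P) (a : P) {V0 : Type} [AddCommGroup V0]
    (g : ↥(I.carrier (I.cls a)) → V0) (z : I.Classes) : Set (↥(I.carrier z) → V0) :=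
  {f | ∃ (x' : ↥(I.carrier z)) (c : ↥(I.carrier (I.cls a))),
    (c : P) < (x' : P) ∧ f = fun w => if w = x' then g c else 0}

/-- `Q` is (isomorphic to) the representation `P(w)` for the class `w = [a]`:  there is a
basis of `Q₀` indexed by the class of `a` (so `e₁ = B a`, `e₂ = B b`, or a single `e` for a
singleton class), `Q_w` is spanned by the generator `B` together with `genset`, and every
other `Q_z` is spanned by `genset`. -/
def IsPw {I : PosetInv P} (Q : RepI k I) (a : P) : Prop :=
  ∃ B : Module.Basis ↥(I.carrier (I.cls a)) k Q.V0,
    Q.Vz (I.cls a) = Submodule.span k ({⇑B} ∪ genset I a ⇑B (I.cls a)) ∧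
    ∀ z, z ≠ I.cls a → Q.Vz z = Submodule.span k (genset I a ⇑B z)

/-- A representation is `ε`-projective if every morphism to the target of a proper
epimorphism (= `ε`-deflation) lifts along it. -/
def EpsProjective {k : Type} [Field k] {P : Type} [PartialOrder P] {I : PosetInv P}
    (Q : RepI k I) : Prop :=
  ∀ (E V : RepI k I) (g : Hom E V), ProperEpi g →
    ∀ f : Hom Q V, ∃ h : Hom Q E, Hom.comp g h = f

lemma PosetInv.cls_eq_of_mem {P : Type} [PartialOrder P] (I : PosetInv P) {z : I.Classes}
    {x : P} (hx : x ∈ I.carrier z) : I.cls x = z := by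
  induction z using Quotient.inductionOn
  exact Quotient.sound (I.r_symm hx)

lemma RepI.ite_mem_Vz_of_lt {k : Type} [Field k] {P : Type} [PartialOrder P]
    {I : PosetInv P} (E : RepI k I) {z₀ z : I.Classes} {y : ↥(I.carrier z₀)}
    {x : ↥(I.carrier z)} (hlt : (y : P) < x) {q : ↥(I.carrier z₀) → E.V0}
    (hq : q ∈ E.Vz z₀) : (fun w => if w = x then q y else 0) ∈ E.Vz z := by
  obtain ⟨y, hy⟩ := y
  obtain ⟨x, hx⟩ := x
  obtain rfl := I.cls_eq_of_mem hy
  obtain rfl := I.cls_eq_of_mem hx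
  simpa only [← Subtype.coe_inj] using E.compat hlt q hq

lemma span_genset_le_comap {k : Type} [Field k] {P : Type} [PartialOrder P]
    {I : PosetInv P} (E : RepI k I) (a : P) {V0 : Type} [AddCommGroup V0] [Module k V0]
    (g : ↥(I.carrier (I.cls a)) → V0) (φ : V0 →ₗ[k] E.V0) (hφg : φ ∘ g ∈ E.Vz (I.cls a))
    (z : I.Classes) :
    Submodule.span k (genset I a g z) ≤ (E.Vz z).comap (φ.compLeft _) := by
  rw [Submodule.span_le]
  rintro _ ⟨x, c, hlt, rfl⟩
  rw [SetLike.mem_coe, Submodule.mem_comap]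
  convert E.ite_mem_Vz_of_lt hlt hφg using 1
  funext w
  simp only [LinearMap.compLeft_apply, Function.comp_apply, apply_ite φ, map_zero]

lemma exists_hom_apply_basis {k : Type} [Field k] {P : Type} [PartialOrder P]
    {I : PosetInv P} {a : P} {Q : RepI k I} (E : RepI k I)
    (B : Module.Basis ↥(I.carrier (I.cls a)) k Q.V0)
    (hBa : Q.Vz (I.cls a) = Submodule.span k ({⇑B} ∪ genset I a ⇑B (I.cls a)))
    (hBz : ∀ z, z ≠ I.cls a → Q.Vz z = Submodule.span k (genset I a ⇑B z))
    {q : ↥(I.carrier (I.cls a)) → E.V0} (hq : q ∈ E.Vz (I.cls a)) :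
    ∃ h : Hom Q E, ∀ w, h.φ (B w) = q w := by
  set φ := B.constr k q
  have hφB : φ ∘ B ∈ E.Vz (I.cls a) := (funext (B.constr_basis k q) : φ ∘ B = q) ▸ hq
  have hgen := span_genset_le_comap E a B φ hφB
  have hmaps : ∀ z, Q.Vz z ≤ (E.Vz z).comap (φ.compLeft _) := by
    intro z
    rcases eq_or_ne z (I.cls a) with rfl | hz
    · rw [hBa, Submodule.span_union, sup_le_iff, Submodule.span_singleton_le_iff_mem]
      exact ⟨hφB, hgen _⟩
    · exact hBz z hz ▸ hgen z
  exact ⟨⟨φ, fun z p hp => hmaps z hp⟩, B.constr_basis k q⟩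

theorem Pw_projective
    {k : Type} [Field k] {P : Type} [PartialOrder P] {I : PosetInv P}
    (a : P) (Q : RepI k I) (hQ : IsPw Q a) : EpsProjective Q := by
  obtain ⟨B, hBa, hBz⟩ := hQ
  intro E V g ⟨_, g_surj_Vz⟩ f
  have hfB : (fun w => f.φ (B w)) ∈ V.Vz (I.cls a) :=
    f.maps _ _ (hBa ▸ Submodule.subset_span (Or.inl rfl))
  obtain ⟨q, hq, hgq⟩ := g_surj_Vz _ _ hfB
  obtain ⟨h, hhB⟩ := exists_hom_apply_basis E B hBa hBz hq
  refine ⟨h, Hom.ext (B.ext fun w => ?_)⟩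
  change g.φ (h.φ (B w)) = f.φ (B w)
  rw [hhB]
  exact congrFun hgq w
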